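/- Let n ≥ 4, let V be a finite set with |V| = n, and let f₁, f₂ be weak linking functions on V such that: f₁ is the star function of a fan with axis pq (i.e., f₁ = p{q}I₁ with I₁ = V − {p,q}); and f₂ is either a fan whose axis is an edge xy disjoint from {p,q}, or a proper star (both parts of size ≥ 2) whose apex x is not in {p,q}. Then f₃ = −(f₁ + f₂) is not weak: there is a cycle C in V with |f₃(C)| ≥ 2. -/
import Mathlib


open scoped Classical

section Defs

variable {V : Type*} {W : Type*}

/-- A map `V³ → ℤ` alternating in its arguments. -/
def IsAlt (f : V → V → V → ℤ) : Prop :=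
  (∀ a b c, f b a c = - f a b c) ∧ (∀ a b c, f a c b = - f a b c)

/-- The simplicial cocycle identity. -/
def IsCocycle (f : V → V → V → ℤ) : Prop :=
  ∀ a b c d, f b c d - f a c d + f a b d - f a b c = 0

/-- A linking function on `V`. -/
def IsLinkingFun (f : V → V → V → ℤ) : Prop := IsAlt f ∧ IsCocycle f

/-- A cycle in the complete graph on `V`: a list of at least 3 distinct vertices. -/
def IsCycle (C : List V) : Prop := C.Nodup ∧ 3 ≤ C.length

/-- The value of `f` on a cycle, via the standard triangulation
`f(C) = ∑_{i=1}^{k-2} f(v₀, vᵢ, vᵢ₊₁)`. -/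
def cycleVal (f : V → V → V → ℤ) : List V → ℤ
  | [] => 0
  | v :: rest => ∑ i ∈ Finset.range (rest.length - 1),
      f v (rest.getD i v) (rest.getD (i + 1) v)

/-- `f` is weak: `|f(C)| ≤ 1` for every cycle `C`. -/
def IsWeak (f : V → V → V → ℤ) : Prop :=
  ∀ C : List V, IsCycle C → |cycleVal f C| ≤ 1

/-- `f` is nontrivial: `f(C) ≠ 0` for some cycle `C`. -/
def IsNontrivial (f : V → V → V → ℤ) : Prop :=
  ∃ C : List V, IsCycle C ∧ cycleVal f C ≠ 0

noncomputable def starEdge (O I : Set V) (x y : V) : ℤ :=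
  (if x ∈ O ∧ y ∈ I then 1 else 0) - (if x ∈ I ∧ y ∈ O then 1 else 0)

/-- The star function `pOI`: the alternating function with value `1` on `(p,q,r)`
for `q ∈ O`, `r ∈ I`, and value `0` on triples not of this form up to reorientation. -/
noncomputable def starFun (p : V) (O I : Set V) (a b c : V) : ℤ :=
  (if a = p then starEdge O I b c else 0)
    - (if b = p then starEdge O I a c else 0)
    + (if c = p then starEdge O I a b else 0)

/-- `({p}, O, I)` is an ordered partition of `V` into three nonempty parts. -/
def IsStarPartition (p : V) (O I : Set V) : Prop :=
  O.Nonempty ∧ I.Nonempty ∧ p ∉ O ∧ p ∉ I ∧ Disjoint O I ∧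
    insert p (O ∪ I) = (Set.univ : Set V)

/-- A bilinking form between `V` and `W`. -/
def IsBilinking (lam : V → V → V → W → W → W → ℤ) : Prop :=
  (∀ u v w, IsLinkingFun (fun a b c => lam a b c u v w)) ∧
  (∀ a b c, IsLinkingFun (lam a b c))

/-- The value of a bilinking form on a pair of cycles. -/
def biCycleVal (lam : V → V → V → W → W → W → ℤ) (C : List V) (D : List W) : ℤ :=
  cycleVal (fun a b c => cycleVal (lam a b c) D) C

/-- `K_V` and `K_W` are weakly linked under `lam`. -/
def WeaklyLinked (lam : V → V → V → W → W → W → ℤ) : Prop :=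
  (∀ (C : List V) (D : List W), IsCycle C → IsCycle D → |biCycleVal lam C D| ≤ 1) ∧
  ∃ (C : List V) (D : List W), IsCycle C ∧ IsCycle D ∧ biCycleVal lam C D ≠ 0

end Defs

section Aux

variable {V : Type*}

lemma cycleVal_four (f : V → V → V → ℤ) (a b c d : V) :
    cycleVal f [a, b, c, d] = f a b c + f a c d := by
  simp [cycleVal, Finset.sum_range_succ]

lemma cycleVal_five (f : V → V → V → ℤ) (a b c d e : V) :
    cycleVal f [a, b, c, d, e] = f a b c + f a c d + f a d e := by
  simp [cycleVal, Finset.sum_range_succ, add_assoc]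

end Aux

/-- a fan and a star with apex (or axis) disjoint from the fan's axis
force a strong link on the third cycle of the theta curve. -/
theorem disjoint_axes_strongly_link {V : Type*} [Fintype V] (hV : 4 ≤ Fintype.card V)
    (p q : V) (hpq : p ≠ q)
    (f₁ f₂ : V → V → V → ℤ)
    (hlin₁ : IsLinkingFun f₁) (hlin₂ : IsLinkingFun f₂)
    (hweak₁ : IsWeak f₁) (hweak₂ : IsWeak f₂)
    (hf₁ : f₁ = starFun p ({q} : Set V) (({p, q} : Set V)ᶜ))
    (hf₂ :
      (∃ x y : V, x ≠ y ∧ x ∉ ({p, q} : Set V) ∧ y ∉ ({p, q} : Set V) ∧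
        f₂ = starFun x ({y} : Set V) (({x, y} : Set V)ᶜ)) ∨
      (∃ (x : V) (O I : Set V), x ≠ p ∧ x ≠ q ∧ IsStarPartition x O I ∧
        O.Nontrivial ∧ I.Nontrivial ∧ f₂ = starFun x O I)) :
    ∃ C : List V, IsCycle C ∧
      2 ≤ |cycleVal (fun a b c => -(f₁ a b c + f₂ a b c)) C| := by
  subst hf₁
  rcases hf₂ with ⟨x, y, hxy, hx, hy, rfl⟩ | ⟨x, O, I, hxp, hxq, hpart, hOnt, hInt, rfl⟩
  · -- f₂ is a fan with axis xy disjoint from {p,q}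
    simp only [Set.mem_insert_iff, Set.mem_singleton_iff, not_or] at hx hy
    obtain ⟨hxp, hxq⟩ := hx
    obtain ⟨hyp, hyq⟩ := hy
    refine ⟨[p, q, x, y], ⟨?_, by norm_num⟩, ?_⟩
    · simp [hpq, Ne.symm hxp, Ne.symm hyp, Ne.symm hxq, Ne.symm hyq, hxy]
    · have e1 : starFun p ({q} : Set V) (({p, q} : Set V)ᶜ) p q x = 1 := by
        simp [starFun, starEdge, Ne.symm hpq, hxp, hxq]
      have e2 : starFun p ({q} : Set V) (({p, q} : Set V)ᶜ) p x y = 0 := by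
        simp [starFun, starEdge, hxp, hxq, hyp, hyq]
      have e3 : starFun x ({y} : Set V) (({x, y} : Set V)ᶜ) p q x = 0 := by
        simp [starFun, starEdge, Ne.symm hxp, Ne.symm hxq, Ne.symm hyp, Ne.symm hyq]
      have e4 : starFun x ({y} : Set V) (({x, y} : Set V)ᶜ) p x y = 1 := by
        simp [starFun, starEdge, Ne.symm hxp, Ne.symm hyp, hxy, Ne.symm hxy]
      rw [cycleVal_four]
      norm_num [e1, e2, e3, e4]
  · -- f₂ is a proper star with apex x ∉ {p,q}
    obtain ⟨hO, hI, hxO, hxI, hdisj, huniv⟩ := hpart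
    have hOI : ∀ v ∈ O, v ∉ I := fun v hv => Set.disjoint_left.mp hdisj hv
    have hIO : ∀ v ∈ I, v ∉ O := fun v hv => Set.disjoint_right.mp hdisj hv
    have hmem : ∀ v : V, v ≠ x → v ∈ O ∨ v ∈ I := by
      intro v hv
      have hvu : v ∈ insert x (O ∪ I) := huniv ▸ Set.mem_univ v
      simpa [Set.mem_insert_iff, hv] using hvu
    rcases hmem q (Ne.symm hxq) with hqO | hqI
    · rcases hmem p (Ne.symm hxp) with hpO | hpI
      · -- p ∈ O, q ∈ O : cycle [p, q, u, x] with u ∈ I, u ≠ q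
        obtain ⟨u, huI, huq⟩ := hInt.exists_ne q
        have hup : u ≠ p := fun h => hIO u huI (h ▸ hpO)
        have hux : u ≠ x := fun h => hxI (h ▸ huI)
        refine ⟨[p, q, u, x], ⟨?_, by norm_num⟩, ?_⟩
        · simp [hpq, hup, Ne.symm hup, hxp, Ne.symm hxp, huq, Ne.symm huq, hxq, Ne.symm hxq, hux, Ne.symm hux]
        · have e1 : starFun p ({q} : Set V) (({p, q} : Set V)ᶜ) p q u = 1 := by
            simp [starFun, starEdge, Ne.symm hpq, hup, huq]
          have e2 : starFun p ({q} : Set V) (({p, q} : Set V)ᶜ) p u x = 0 := by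
            simp [starFun, starEdge, hup, huq, hxp, hxq]
          have e3 : starFun x O I p q u = 0 := by
            simp [starFun, Ne.symm hxp, Ne.symm hxq, hux]
          have e4 : starFun x O I p u x = 1 := by
            simp [starFun, starEdge, Ne.symm hxp, hux, hpO, huI, hOI p hpO, hIO u huI]
          rw [cycleVal_four]
          norm_num [e1, e2, e3, e4]
      · -- p ∈ I, q ∈ O : cycle [x, u, p, q, v] with u ∈ O \ {q}, v ∈ I \ {p}
        obtain ⟨u, huO, huq⟩ := hOnt.exists_ne q
        obtain ⟨v, hvI, hvp⟩ := hInt.exists_ne p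
        have hux : u ≠ x := fun h => hxO (h ▸ huO)
        have hvx : v ≠ x := fun h => hxI (h ▸ hvI)
        have hup : u ≠ p := fun h => hOI u huO (h ▸ hpI)
        have huv : u ≠ v := fun h => hOI u huO (h ▸ hvI)
        have hqv : q ≠ v := fun h => hOI q hqO (h ▸ hvI)
        refine ⟨[x, u, p, q, v], ⟨?_, by norm_num⟩, ?_⟩
        · simp [hxp, Ne.symm hxp, hxq, Ne.symm hxq, hux, Ne.symm hux, hvx, Ne.symm hvx, hup, Ne.symm hup, huq, Ne.symm huq, huv, Ne.symm huv, hpq, hvp, Ne.symm hvp, hqv, Ne.symm hqv]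
        · have e1 : starFun p ({q} : Set V) (({p, q} : Set V)ᶜ) x u p = 0 := by
            simp [starFun, starEdge, hxp, hxq, hup, huq]
          have e2 : starFun p ({q} : Set V) (({p, q} : Set V)ᶜ) x p q = 1 := by
            simp [starFun, starEdge, hxp, hxq, Ne.symm hpq]
          have e3 : starFun p ({q} : Set V) (({p, q} : Set V)ᶜ) x q v = 0 := by
            simp [starFun, starEdge, hxp, hxq, Ne.symm hpq, hvp, Ne.symm hvp, hqv, Ne.symm hqv]
          have e4 : starFun x O I x u p = 1 := by
            simp [starFun, starEdge, hux, Ne.symm hux, hxp, Ne.symm hxp, huO, hpI, hOI u huO, hIO p hpI]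
          have e5 : starFun x O I x p q = -1 := by
            simp [starFun, starEdge, Ne.symm hxp, Ne.symm hxq, hpI, hqO, hIO p hpI, hOI q hqO]
          have e6 : starFun x O I x q v = 1 := by
            simp [starFun, starEdge, hxq, Ne.symm hxq, hvx, Ne.symm hvx, hqO, hvI, hOI q hqO, hIO v hvI]
          rw [cycleVal_five]
          norm_num [e1, e2, e3, e4, e5, e6]
    · -- q ∈ I : cycle [p, q, x, v] with v ∈ O, v ≠ p
      obtain ⟨v, hvO, hvp⟩ := hOnt.exists_ne p
      have hvq : v ≠ q := fun h => hOI v hvO (h ▸ hqI)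
      have hvx : v ≠ x := fun h => hxO (h ▸ hvO)
      have hqx : q ≠ x := Ne.symm hxq
      refine ⟨[p, q, x, v], ⟨?_, by norm_num⟩, ?_⟩
      · simp [hpq, hxp, Ne.symm hxp, hvp, Ne.symm hvp, hqx, hvq, Ne.symm hvq, hvx, Ne.symm hvx]
      · have e1 : starFun p ({q} : Set V) (({p, q} : Set V)ᶜ) p q x = 1 := by
          simp [starFun, starEdge, Ne.symm hpq, hxp, hxq]
        have e2 : starFun p ({q} : Set V) (({p, q} : Set V)ᶜ) p x v = 0 := by
          simp [starFun, starEdge, hxp, hxq, hvq, hvp, Ne.symm hvp]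
        have e34 : starFun x O I p q x + starFun x O I p x v = 1 := by
          rcases hmem p (Ne.symm hxp) with hpO | hpI
          · have e3 : starFun x O I p q x = 1 := by
              simp [starFun, starEdge, Ne.symm hxp, hqx, hpO, hqI, hOI p hpO, hIO q hqI]
            have e4 : starFun x O I p x v = 0 := by
              simp [starFun, starEdge, hxp, Ne.symm hxp, hvx, Ne.symm hvx, hpO, hvO, hOI p hpO, hOI v hvO]
            rw [e3, e4]; norm_num
          · have e3 : starFun x O I p q x = 0 := by
              simp [starFun, starEdge, Ne.symm hxp, hqx, hpI, hqI, hIO p hpI, hIO q hqI]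
            have e4 : starFun x O I p x v = 1 := by
              simp [starFun, starEdge, hxp, Ne.symm hxp, hvx, Ne.symm hvx, hpI, hvO, hIO p hpI, hOI v hvO]
            rw [e3, e4]; norm_num
        rw [cycleVal_four]
        simp only [e1, e2]
        have habs : -(1 + starFun x O I p q x) + -(0 + starFun x O I p x v) = -2 := by
          omega
        rw [habs]
        norm_num
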